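/- Fix an integer m ≥ 2, set N = m+1 and h = 1/N, and let ε > 0 and b₀ > 0 be reals. Let A be the m² × m² symmetric positive definite matrix defined by A(r,r) = 4ε² + h²b₀ for all r, A(r,c) = −ε² if |r−c| = m or if (|r−c| = 1 and ⌈r/m⌉ = ⌈c/m⌉), and A(r,c) = 0 otherwise, and let L be its Cholesky factor. Then the number of fill-in entries, i.e. the number of pairs (r,c) with 1 ≤ c < r ≤ m² such that L(r,c) ≠ 0 but A(r,c) = 0, equals (m−1)³; equivalently, the number of pairs (r,c) with c ≤ r and A(r,c) ≠ 0 equals 3m² − 2m, and (m−1)³ + 3m² − 2m = m³ + m − 1. -/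

import Mathlib

/-- The m² × m² symmetrized 5-point finite-difference matrix for
−ε²Δu + b₀u on a uniform mesh of width h = 1/(m+1) on the unit square.
Rows/columns r,c : Fin (m^2) encode the 1-based indices r+1, c+1;
the condition ⌈(r+1)/m⌉ = ⌈(c+1)/m⌉ is equivalent to r/m = c/m (Nat division). -/
noncomputable def fdMatrix (m : ℕ) (ε b₀ : ℝ) :
    Matrix (Fin (m ^ 2)) (Fin (m ^ 2)) ℝ := fun r c =>
  if r = c then 4 * ε ^ 2 + (1 / (m + 1) : ℝ) ^ 2 * b₀
  else if (r : ℕ) + m = (c : ℕ) ∨ (c : ℕ) + m = (r : ℕ) then -ε ^ 2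
  else if ((r : ℕ) + 1 = (c : ℕ) ∨ (c : ℕ) + 1 = (r : ℕ))
      ∧ (r : ℕ) / m = (c : ℕ) / m then -ε ^ 2
  else 0

/-!
The off-diagonal entries of `A` are `≤ 0`, so by induction on the column every strictly lower
entry of its Cholesky factor is `≤ 0` as well. In the column recurrence
`L r c * L c c = A r c - ∑ k < c, L r k * L c k` all terms then have the same sign, so no
cancellation occurs: `L r c ≠ 0` iff `A r c ≠ 0` or `L r k, L c k ≠ 0` for some `k < c`. This
recursion determines the nonzero pattern of `L` from that of `A`, and for the grid matrix it is
the full band `r - m ≤ c < r` except in the first block row, where `L` stays bidiagonal.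
Counting row by row, each of the `m - 1` lower block rows of `L` carries `(m - 1)²` fill entries.
-/

open Finset

def IsEliminationFill {α : Type*} [LT α] (B P : α → α → Prop) : Prop :=
  ∀ r c, c < r → (P r c ↔ B r c ∨ ∃ k < c, P r k ∧ P c k)

lemma IsEliminationFill.iff {α : Type*} [Preorder α] [WellFoundedLT α]
    {B P Q : α → α → Prop}
    (hP : IsEliminationFill B P) (hQ : IsEliminationFill B Q) {r c : α} (hcr : c < r) :
    P r c ↔ Q r c := by
  induction c using WellFoundedLT.induction generalizing r with
  | _ c ih =>
  rw [hP r c hcr, hQ r c hcr]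
  refine or_congr_right (exists_congr fun k => and_congr_right fun hkc => ?_)
  rw [ih k hkc (hkc.trans hcr), ih k hkc hkc]

namespace Matrix

variable {ι : Type*} [Fintype ι] [LinearOrder ι] {A L : Matrix ι ι ℝ}

structure IsCholeskyFactor (A L : Matrix ι ι ℝ) : Prop where
  apply_eq_zero_of_lt : ∀ i j, i < j → L i j = 0
  diag_pos : ∀ i, 0 < L i i
  eq_mul_transpose : A = L * Lᵀ

lemma mul_transpose_apply_of_lower (hL : ∀ i j, i < j → L i j = 0) (r c : ι) :
    (L * Lᵀ) r c = L r c * L c c + ∑ k ∈ univ.filter (· < c), L r k * L c k := by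
  simp only [mul_apply, transpose_apply]
  rw [← sum_insert (f := fun k => L r k * L c k) (s := univ.filter (· < c)) (by simp)]
  refine (sum_subset (subset_univ _) fun k _ hk => ?_).symm
  have hck : c < k := by
    simp only [mem_insert, mem_filter, mem_univ, true_and, not_or, not_lt] at hk
    exact lt_of_le_of_ne hk.2 (Ne.symm hk.1)
  simp [hL c k hck]

namespace IsCholeskyFactor

lemma apply_eq (h : IsCholeskyFactor A L) (r c : ι) :
    A r c = L r c * L c c + ∑ k ∈ univ.filter (· < c), L r k * L c k := by
  rw [h.eq_mul_transpose, mul_transpose_apply_of_lower h.apply_eq_zero_of_lt]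

lemma apply_self_pos (h : IsCholeskyFactor A L) (r : ι) : 0 < A r r := by
  rw [h.apply_eq]
  have := h.diag_pos r
  have : 0 ≤ ∑ k ∈ univ.filter (· < r), L r k * L r k :=
    sum_nonneg fun k _ => mul_self_nonneg _
  positivity

lemma apply_nonpos (h : IsCholeskyFactor A L) (hA : ∀ i j, j < i → A i j ≤ 0) {r c : ι}
    (hcr : c < r) : L r c ≤ 0 := by
  induction c using WellFoundedLT.induction generalizing r with
  | _ c ih =>
  have hS : 0 ≤ ∑ k ∈ univ.filter (· < c), L r k * L c k := sum_nonneg fun k hk => by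
    have hkc : k < c := (mem_filter.1 hk).2
    exact mul_nonneg_of_nonpos_of_nonpos (ih k hkc (hkc.trans hcr)) (ih k hkc hkc)
  have hprod : L r c * L c c ≤ 0 := by linarith [h.apply_eq r c, hA r c hcr]
  exact nonpos_of_mul_nonpos_left hprod (h.diag_pos c)

lemma isEliminationFill (h : IsCholeskyFactor A L) (hA : ∀ i j, j < i → A i j ≤ 0) :
    IsEliminationFill (fun i j => A i j ≠ 0) (fun i j => L i j ≠ 0) := by
  intro r c hcr
  have hterm : ∀ k ∈ univ.filter (· < c), 0 ≤ L r k * L c k := fun k hk => by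
    have hkc : k < c := (mem_filter.1 hk).2
    exact mul_nonneg_of_nonpos_of_nonpos (h.apply_nonpos hA (hkc.trans hcr)) (h.apply_nonpos hA hkc)
  have hS := sum_nonneg hterm
  have hArc := hA r c hcr
  have key : L r c * L c c = A r c - ∑ k ∈ univ.filter (· < c), L r k * L c k := by
    rw [h.apply_eq r c]; ring
  have hsplit : A r c - ∑ k ∈ univ.filter (· < c), L r k * L c k = 0 ↔
      A r c = 0 ∧ ∑ k ∈ univ.filter (· < c), L r k * L c k = 0 :=
    ⟨fun h0 => ⟨by linarith, by linarith⟩, fun ⟨h1, h2⟩ => by rw [h1, h2, sub_zero]⟩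
  dsimp only
  rw [← mul_ne_zero_iff_right (h.diag_pos c).ne', key, ne_eq, hsplit,
    sum_eq_zero_iff_of_nonneg hterm]
  simp only [mem_filter, mem_univ, true_and, mul_eq_zero, not_and_or, not_forall, not_or,
    exists_prop]

end IsCholeskyFactor

end Matrix

lemma ncard_setOf_fin_prod (n : ℕ) (P : ℕ → ℕ → Prop) [∀ r c, Decidable (P r c)] :
    {p : Fin n × Fin n | P p.1 p.2}.ncard = ∑ r ∈ range n, #{c ∈ range n | P r c} := by
  rw [Set.ncard_eq_toFinset_card', Set.toFinset_ofPred, card_filter, Fintype.sum_prod_type]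
  simp only [card_filter]
  rw [Fin.sum_univ_eq_sum_range (fun r => ∑ c : Fin n, if P r c then 1 else 0)]
  exact sum_congr rfl fun r _ => Fin.sum_univ_eq_sum_range (fun c => if P r c then 1 else 0) n

lemma sum_range_mul_eq_sum_sum {M : Type*} [AddCommMonoid M] (f : ℕ → M) (m k : ℕ) :
    ∑ r ∈ range (m * k), f r = ∑ i ∈ range k, ∑ j ∈ range m, f (m * i + j) := by
  induction k with
  | zero => simp
  | succ k ih => rw [Nat.mul_succ, sum_range_add, ih, sum_range_succ]

lemma Nat.le_mul_add_iff {m i j : ℕ} (hj : j < m) : m ≤ m * i + j ↔ i ≠ 0 := by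
  rcases i with _ | i
  · simpa using hj
  · simp only [ne_eq, Nat.add_one_ne_zero, not_false_eq_true, iff_true]
    nlinarith

lemma Nat.dvd_mul_add_iff {m i j : ℕ} (hj : j < m) : m ∣ m * i + j ↔ j = 0 := by
  rw [Nat.dvd_add_right (dvd_mul_right m i), Nat.dvd_iff_mod_eq_zero, Nat.mod_eq_of_lt hj]

def GridAdj (m r c : ℕ) : Prop := c + m = r ∨ (c + 1 = r ∧ ¬ m ∣ r)

instance (m r c : ℕ) : Decidable (GridAdj m r c) := inferInstanceAs (Decidable (_ ∨ _))

def CholeskyBand (m r c : ℕ) : Prop := c < r ∧ r ≤ c + m ∧ (m ≤ r ∨ r = c + 1)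

instance (m r c : ℕ) : Decidable (CholeskyBand m r c) := inferInstanceAs (Decidable (_ ∧ _))

lemma choleskyBand_iff {m r c : ℕ} (hm : 0 < m) (hcr : c < r) :
    CholeskyBand m r c ↔
      GridAdj m r c ∨ ∃ k < c, CholeskyBand m r k ∧ CholeskyBand m c k := by
  unfold CholeskyBand GridAdj
  constructor
  · rintro ⟨-, hle, hor⟩
    by_cases hadj : c + m = r ∨ (c + 1 = r ∧ ¬ m ∣ r)
    · exact Or.inl hadj
    · right
      have hmr : m ≤ r := hor.elim id fun h =>
        Nat.le_of_dvd (by omega) (by_contra fun hn => hadj (Or.inr ⟨h.symm, hn⟩))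
      have hcm : c + m ≠ r := fun h => hadj (Or.inl h)
      clear hadj hor
      -- the fill is produced by eliminating the preceding unknown `c - 1`
      refine ⟨c - 1, ?_, ?_, ?_⟩ <;> omega
  · rintro ((h | ⟨h, -⟩) | ⟨k, hkc, ⟨hkr, hrk, hor⟩, -, hck, -⟩) <;> omega

lemma fdMatrix_apply_of_lt {m : ℕ} {ε b₀ : ℝ} {r c : Fin (m ^ 2)} (hcr : c < r) :
    fdMatrix m ε b₀ r c = if GridAdj m r c then -ε ^ 2 else 0 := by
  have hblock : (c : ℕ) + 1 = r → ((r : ℕ) / m = c / m ↔ ¬ m ∣ r) := by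
    rintro h
    rw [← h, Nat.succ_div]
    split_ifs with hd <;> simp [hd]
  unfold fdMatrix
  rw [if_neg hcr.ne']
  by_cases hg : GridAdj m r c
  · rw [if_pos hg]
    rcases hg with h | ⟨h, hd⟩
    · rw [if_pos (Or.inr h)]
    · have hm1 : m ≠ 1 := by rintro rfl; exact hd (one_dvd _)
      rw [if_neg (by omega), if_pos ⟨Or.inr h, (hblock h).2 hd⟩]
  · have hcm : (c : ℕ) + m ≠ r := fun h => hg (Or.inl h)
    rw [if_neg hg, if_neg (by clear hg hblock; omega), if_neg]
    rintro ⟨h | h, hb⟩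
    · omega
    · exact hg (Or.inr ⟨h, (hblock h).1 hb⟩)

lemma fdMatrix_apply_nonpos_of_lt {m : ℕ} {ε b₀ : ℝ} (r c : Fin (m ^ 2)) (hcr : c < r) :
    fdMatrix m ε b₀ r c ≤ 0 := by
  rw [fdMatrix_apply_of_lt hcr]
  split_ifs
  · exact neg_nonpos.2 (sq_nonneg ε)
  · rfl

lemma fdMatrix_ne_zero_iff_of_lt {m : ℕ} {ε b₀ : ℝ} (hε : ε ≠ 0) {r c : Fin (m ^ 2)}
    (hcr : c < r) : fdMatrix m ε b₀ r c ≠ 0 ↔ GridAdj m r c := by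
  rw [fdMatrix_apply_of_lt hcr]
  split_ifs with h <;> simp [h, hε]

lemma isEliminationFill_choleskyBand {m : ℕ} (hm : 0 < m) {ε : ℝ} (hε : ε ≠ 0)
    (b₀ : ℝ) :
    IsEliminationFill (fun r c : Fin (m ^ 2) => fdMatrix m ε b₀ r c ≠ 0)
      (fun r c => CholeskyBand m r c) := by
  intro r c hcr
  dsimp only
  rw [fdMatrix_ne_zero_iff_of_lt hε hcr, choleskyBand_iff hm hcr]
  exact or_congr_right ⟨fun ⟨k, hk, h⟩ => ⟨⟨k, hk.trans c.isLt⟩, hk, h⟩,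
    fun ⟨k, hk, h⟩ => ⟨k, hk, h⟩⟩

lemma setOf_fill_eq {m : ℕ} (hm : 0 < m) {ε b₀ : ℝ} (hε : ε ≠ 0)
    {L : Matrix (Fin (m ^ 2)) (Fin (m ^ 2)) ℝ} (hL : (fdMatrix m ε b₀).IsCholeskyFactor L) :
    {p : Fin (m ^ 2) × Fin (m ^ 2) |
        p.2 < p.1 ∧ L p.1 p.2 ≠ 0 ∧ fdMatrix m ε b₀ p.1 p.2 = 0}
      = {p | CholeskyBand m p.1 p.2 ∧ ¬ GridAdj m p.1 p.2} := by
  have hband : ∀ r c, c < r → (L r c ≠ 0 ↔ CholeskyBand m r c) := fun r c hcr =>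
    (hL.isEliminationFill fdMatrix_apply_nonpos_of_lt).iff
      (isEliminationFill_choleskyBand hm hε b₀) hcr
  ext ⟨r, c⟩
  simp only [Set.mem_ofPred_eq]
  constructor
  · rintro ⟨hcr, hLrc, hArc⟩
    exact ⟨(hband r c hcr).1 hLrc, fun hg => (fdMatrix_ne_zero_iff_of_lt hε hcr).2 hg hArc⟩
  · rintro ⟨hb, hg⟩
    have hcr : c < r := hb.1
    exact ⟨hcr, (hband r c hcr).2 hb,
      not_not.1 fun h => hg ((fdMatrix_ne_zero_iff_of_lt hε hcr).1 h)⟩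

lemma setOf_lower_ne_zero_eq {m : ℕ} {ε b₀ : ℝ} (hε : ε ≠ 0)
    {L : Matrix (Fin (m ^ 2)) (Fin (m ^ 2)) ℝ} (hL : (fdMatrix m ε b₀).IsCholeskyFactor L) :
    {p : Fin (m ^ 2) × Fin (m ^ 2) | p.2 ≤ p.1 ∧ fdMatrix m ε b₀ p.1 p.2 ≠ 0}
      = {p | (p.2 : ℕ) = p.1 ∨ GridAdj m p.1 p.2} := by
  ext ⟨r, c⟩
  simp only [Set.mem_ofPred_eq]
  rcases lt_trichotomy c r with hcr | rfl | hrc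
  · rw [fdMatrix_ne_zero_iff_of_lt hε hcr]
    simp [hcr.le, Fin.val_ne_of_ne hcr.ne]
  · simp [(hL.apply_self_pos c).ne']
  · have hrc' : (r : ℕ) < c := hrc
    simp only [not_le.2 hrc, false_and, false_iff, not_or, GridAdj]
    omega

lemma card_filter_choleskyBand_not_gridAdj (m : ℕ) {r n : ℕ} (hr : r < n) :
    #{c ∈ range n | CholeskyBand m r c ∧ ¬ GridAdj m r c}
      = if m ≤ r then (if m ∣ r then m - 1 else m - 2) else 0 := by
  unfold CholeskyBand GridAdj
  split_ifs with hmr hd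
  · calc _ = #(Ico (r + 1 - m) r) := by
          congr 1; ext c
          simp only [mem_filter, mem_range, mem_Ico, hd, not_true_eq_false, and_false, or_false]
          clear hd; omega
      _ = m - 1 := by rw [Nat.card_Ico]; omega
  · calc _ = #(Ico (r + 1 - m) (r - 1)) := by
          congr 1; ext c
          simp only [mem_filter, mem_range, mem_Ico, hd, not_false_eq_true, and_true]
          clear hd; omega
      _ = m - 2 := by rw [Nat.card_Ico]; omega
  · rw [card_eq_zero, filter_eq_empty_iff]
    rintro c - ⟨⟨hcr, -, hor⟩, hadj⟩
    have hnd : ¬ m ∣ r := fun hd => by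
      have := Nat.eq_zero_of_dvd_of_lt hd (by omega)
      omega
    exact hadj (Or.inr ⟨by omega, hnd⟩)

lemma card_filter_eq_or_gridAdj {m : ℕ} (hm : 2 ≤ m) {r n : ℕ} (hr : r < n) :
    #{c ∈ range n | c = r ∨ GridAdj m r c}
      = 1 + (if m ≤ r then 1 else 0) + (if m ∣ r then 0 else 1) := by
  unfold GridAdj
  by_cases hmr : m ≤ r <;> by_cases hd : m ∣ r <;>
    simp only [hmr, hd, not_true_eq_false, not_false_eq_true, and_false, and_true, or_false,
      if_true, if_false]
  · calc _ = #{r, r - m} := by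
          congr 1; ext c; simp only [mem_filter, mem_range, mem_insert, mem_singleton]
          clear hd; omega
      _ = 2 := card_pair (by omega)
  · calc _ = #{r, r - m, r - 1} := by
          congr 1; ext c; simp only [mem_filter, mem_range, mem_insert, mem_singleton]
          clear hd; omega
      _ = 3 := card_eq_three.2 ⟨_, _, _, by omega, by omega, by omega, rfl⟩
  · calc _ = #{r} := by
          congr 1; ext c; simp only [mem_filter, mem_range, mem_singleton]
          clear hd; omega
      _ = 1 := card_singleton r
  · have hr0 : r ≠ 0 := by rintro rfl; exact hd (dvd_zero m)
    clear hd
    calc _ = #{r, r - 1} := by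
          congr 1; ext c; simp only [mem_filter, mem_range, mem_insert, mem_singleton]; omega
      _ = 2 := card_pair (by omega)

lemma ncard_choleskyBand_not_gridAdj (m : ℕ) :
    {p : Fin (m ^ 2) × Fin (m ^ 2) | CholeskyBand m p.1 p.2 ∧ ¬ GridAdj m p.1 p.2}.ncard
      = (m - 1) ^ 3 := by
  rw [ncard_setOf_fin_prod (m ^ 2) (fun r c => CholeskyBand m r c ∧ ¬ GridAdj m r c),
    sum_congr rfl fun r hr => card_filter_choleskyBand_not_gridAdj m (mem_range.1 hr), sq,
    sum_range_mul_eq_sum_sum]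
  have hblock : ∀ i, ∀ j ∈ range m,
      (if m ≤ m * i + j then (if m ∣ m * i + j then m - 1 else m - 2) else 0)
        = if i = 0 then 0 else if j = 0 then m - 1 else m - 2 := by
    intro i j hj
    rw [mem_range] at hj
    simp only [Nat.le_mul_add_iff hj, Nat.dvd_mul_add_iff hj, ite_not]
  rw [sum_congr rfl fun i _ => sum_congr rfl (hblock i)]
  rcases m with _ | k
  · simp
  · simp only [add_tsub_cancel_right, Nat.reduceSubDiff, sum_ite_irrel, sum_const_zero,
      sum_range_succ', Nat.add_eq_zero_iff, one_ne_zero, and_false, ↓reduceIte, sum_const,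
      card_range, smul_eq_mul, add_zero]
    rcases k with _ | k
    · rfl
    · simp only [Nat.add_sub_cancel]; ring

lemma ncard_eq_or_gridAdj {m : ℕ} (hm : 2 ≤ m) :
    {p : Fin (m ^ 2) × Fin (m ^ 2) | (p.2 : ℕ) = p.1 ∨ GridAdj m p.1 p.2}.ncard
      = 3 * m ^ 2 - 2 * m := by
  rw [ncard_setOf_fin_prod (m ^ 2) (fun r c => c = r ∨ GridAdj m r c),
    sum_congr rfl fun r hr => card_filter_eq_or_gridAdj hm (mem_range.1 hr), sq,
    sum_range_mul_eq_sum_sum]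
  have hblock : ∀ i, ∀ j ∈ range m,
      1 + (if m ≤ m * i + j then 1 else 0) + (if m ∣ m * i + j then 0 else 1)
        = 1 + (if i = 0 then 0 else 1) + (if j = 0 then 0 else 1) := by
    intro i j hj
    rw [mem_range] at hj
    simp only [Nat.le_mul_add_iff hj, Nat.dvd_mul_add_iff hj, ite_not]
  rw [sum_congr rfl fun i _ => sum_congr rfl (hblock i)]
  obtain ⟨k, rfl⟩ : ∃ k, m = k + 1 := ⟨m - 1, by omega⟩
  simp only [sum_range_succ', Nat.add_eq_zero_iff, one_ne_zero, and_false, ↓reduceIte,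
    sum_const, card_range, smul_eq_mul, add_zero, Nat.reduceAdd]
  exact (Nat.sub_eq_of_eq_add (by ring)).symm

theorem stmt_3_general (m : ℕ) (hm : 2 ≤ m) (ε b₀ : ℝ) (hε : 0 < ε)
    (L : Matrix (Fin (m ^ 2)) (Fin (m ^ 2)) ℝ)
    (hL_tri : ∀ i j : Fin (m ^ 2), i < j → L i j = 0)
    (hL_diag : ∀ i : Fin (m ^ 2), 0 < L i i)
    (hL_fac : fdMatrix m ε b₀ = L * L.transpose) :
    {p : Fin (m ^ 2) × Fin (m ^ 2) |
        p.2 < p.1 ∧ L p.1 p.2 ≠ 0 ∧ fdMatrix m ε b₀ p.1 p.2 = 0}.ncard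
      = (m - 1) ^ 3 ∧
    {p : Fin (m ^ 2) × Fin (m ^ 2) |
        p.2 ≤ p.1 ∧ fdMatrix m ε b₀ p.1 p.2 ≠ 0}.ncard
      = 3 * m ^ 2 - 2 * m ∧
    (m - 1) ^ 3 + (3 * m ^ 2 - 2 * m) = m ^ 3 + m - 1 := by
  have hL : (fdMatrix m ε b₀).IsCholeskyFactor L := ⟨hL_tri, hL_diag, hL_fac⟩
  have hm0 : 0 < m := by omega
  refine ⟨?_, ?_, ?_⟩
  · rw [setOf_fill_eq hm0 hε.ne' hL, ncard_choleskyBand_not_gridAdj]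
  · rw [setOf_lower_ne_zero_eq hε.ne' hL, ncard_eq_or_gridAdj hm]
  · have h2m : 2 * m ≤ 3 * m ^ 2 := by nlinarith
    zify [hm0, h2m, hm0.trans_le (Nat.le_add_left m (m ^ 3))]
    ring

theorem stmt_3 (m : ℕ) (hm : 2 ≤ m) (ε b₀ : ℝ) (hε : 0 < ε) (hb₀ : 0 < b₀)
    (L : Matrix (Fin (m ^ 2)) (Fin (m ^ 2)) ℝ)
    (hL_tri : ∀ i j : Fin (m ^ 2), i < j → L i j = 0)
    (hL_diag : ∀ i : Fin (m ^ 2), 0 < L i i)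
    (hL_fac : fdMatrix m ε b₀ = L * L.transpose) :
    {p : Fin (m ^ 2) × Fin (m ^ 2) |
        p.2 < p.1 ∧ L p.1 p.2 ≠ 0 ∧ fdMatrix m ε b₀ p.1 p.2 = 0}.ncard
      = (m - 1) ^ 3 ∧
    {p : Fin (m ^ 2) × Fin (m ^ 2) |
        p.2 ≤ p.1 ∧ fdMatrix m ε b₀ p.1 p.2 ≠ 0}.ncard
      = 3 * m ^ 2 - 2 * m ∧
    (m - 1) ^ 3 + (3 * m ^ 2 - 2 * m) = m ^ 3 + m - 1 :=
  stmt_3_general m hm ε b₀ hε L hL_tri hL_diag hL_fac
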